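/- arXiv:1309.2266 — 4 statements merged into one kernel-verified Lean document; each statement's English description precedes it below -/
import Mathlib

section
/- If a graph G has a bramble B of order greater than k, then every tree-decomposition of G has some bag that covers B (i.e., meets every element of B); consequently the tree-width of G is at least k. -/
open Finset

variable {V : Type} [Fintype V] [DecidableEq V]

/-- Two vertex sets touch: they intersect or are joined by an edge. -/
def Touches (G : SimpleGraph V) (X Y : Finset V) : Prop :=
  (X ∩ Y).Nonempty ∨ ∃ x ∈ X, ∃ y ∈ Y, G.Adj x y

/-- `X` is a connected vertex set of `G`. -/
def IsConnectedSet (G : SimpleGraph V) (X : Finset V) : Prop :=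
  (G.induce (X : Set V)).Connected

/-- A bramble: a family of pairwise touching connected vertex sets. -/
def IsBramble (G : SimpleGraph V) (B : Set (Finset V)) : Prop :=
  (∀ X ∈ B, IsConnectedSet G X) ∧ ∀ X ∈ B, ∀ Y ∈ B, Touches G X Y

/-- `S` covers the family `B`: it meets every member. -/
def Covers (S : Finset V) (B : Set (Finset V)) : Prop :=
  ∀ X ∈ B, (S ∩ X).Nonempty

/-- The order of `B` is `> k`: every cover has more than `k` vertices. -/
def BrambleOrderGT (B : Set (Finset V)) (k : ℕ) : Prop :=
  ∀ S : Finset V, Covers S B → k < S.card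

/-- `(T, bag)` is a tree-decomposition of `G`. -/
def IsTreeDecomp {ι : Type} (G : SimpleGraph V) (T : SimpleGraph ι)
    (bag : ι → Finset V) : Prop :=
  T.IsTree ∧
  (∀ v : V, ∃ t, v ∈ bag t) ∧
  (∀ v w : V, G.Adj v w → ∃ t, v ∈ bag t ∧ w ∈ bag t) ∧
  (∀ v : V, (T.induce {t | v ∈ bag t}).Connected)

/-- `G` has a tree-decomposition all of whose bags have size `≤ k`,
i.e. tree-width `< k` (equivalently `≤ k - 1`). -/
def HasDecompOfWidthLT (G : SimpleGraph V) (k : ℕ) : Prop :=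
  ∃ (ι : Type) (T : SimpleGraph ι) (bag : ι → Finset V),
    IsTreeDecomp G T bag ∧ ∀ t, (bag t).card ≤ k

/-- An internal node of a tree: one with at least two distinct neighbours. -/
def IsInternal {ι : Type} (T : SimpleGraph ι) (t : ι) : Prop :=
  ∃ u u', T.Adj t u ∧ T.Adj t u' ∧ u ≠ u'

/-- A partial (<k)-decomposition: no big internal bag and at least one small bag. -/
def IsPartialDecomp {ι : Type} (G : SimpleGraph V) (k : ℕ) (T : SimpleGraph ι)
    (bag : ι → Finset V) : Prop :=
  IsTreeDecomp G T bag ∧ (∀ t, IsInternal T t → (bag t).card ≤ k) ∧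
    ∃ t, (bag t).card ≤ k

/-- `X` is the `k`-flap at leaf `t`: `t` is a leaf with unique neighbour `u`,
its bag is big, and `X = bag t \ bag u`. -/
def IsFlapAt {ι : Type} (k : ℕ) (T : SimpleGraph ι) (bag : ι → Finset V)
    (t : ι) (X : Finset V) : Prop :=
  ∃ u, T.Adj t u ∧ (∀ u', T.Adj t u' → u' = u) ∧ k < (bag t).card ∧
    X = bag t \ bag u

/-- `X` is a `k`-flap of the decomposition `(T, bag)`. -/
def IsFlap {ι : Type} (k : ℕ) (T : SimpleGraph ι) (bag : ι → Finset V)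
    (X : Finset V) : Prop :=
  ∃ t, IsFlapAt k T bag t X

/-- `X` is a `k`-flap of some partial (<k)-decomposition of `G`. -/
def FlapOf (G : SimpleGraph V) (k : ℕ) (X : Finset V) : Prop :=
  ∃ (ι : Type) (T : SimpleGraph ι) (bag : ι → Finset V),
    IsPartialDecomp G k T bag ∧ IsFlap k T bag X

/-- The neighbourhood of a vertex set: vertices outside `X` adjacent to `X`. -/
def nbhd (G : SimpleGraph V) [DecidableRel G.Adj] (X : Finset V) : Finset V :=
  Finset.univ.filter fun v => v ∉ X ∧ ∃ x ∈ X, G.Adj v x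

/-- `C` is a connected component of `G - S`. -/
def IsCompOf (G : SimpleGraph V) (S : Finset V) (C : Finset V) : Prop :=
  C.Nonempty ∧ C ∩ S = ∅ ∧ IsConnectedSet G C ∧
    ∀ D : Finset V, C ⊆ D → D ∩ S = ∅ → IsConnectedSet G D → D = C

/-- `t` lies on a path from `x` to `y` in `T` (in a tree, the unique path). -/
def OnTreePath {ι : Type} (T : SimpleGraph ι) (x y t : ι) : Prop :=
  ∃ p : T.Walk x y, p.IsPath ∧ t ∈ p.support

/-- A tree-decomposition of the induced subgraph `G[B]`, with bags inside `B`. -/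
def IsTreeDecompOn {ι : Type} (G : SimpleGraph V) (B : Finset V)
    (T : SimpleGraph ι) (bag : ι → Finset V) : Prop :=
  T.IsTree ∧
  (∀ t, bag t ⊆ B) ∧
  (∀ v ∈ B, ∃ t, v ∈ bag t) ∧
  (∀ v w : V, v ∈ B → w ∈ B → G.Adj v w → ∃ t, v ∈ bag t ∧ w ∈ bag t) ∧
  (∀ v ∈ B, (T.induce {t | v ∈ bag t}).Connected)

/-- A partial (<k)-decomposition of the induced subgraph `G[B]`. -/
def IsPartialDecompOn {ι : Type} (G : SimpleGraph V) (B : Finset V) (k : ℕ)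
    (T : SimpleGraph ι) (bag : ι → Finset V) : Prop :=
  IsTreeDecompOn G B T bag ∧ (∀ t, IsInternal T t → (bag t).card ≤ k) ∧
    ∃ t, (bag t).card ≤ k

/-- No component of `G - S` meets both `X` and `Y`. -/
def SepAll (G : SimpleGraph V) (S X Y : Finset V) : Prop :=
  ∀ C : Finset V, IsCompOf G S C → ¬((C ∩ X).Nonempty ∧ (C ∩ Y).Nonempty)


/-!
The nodes of `T` whose bags meet a connected set `X` form a subtree, and touching sets give
intersecting subtrees. Subtrees of a tree have the Helly property, so the finitely many subtrees
coming from the bramble share a node `t`; the bag at `t` covers the bramble and therefore has more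
than `k` vertices.
-/

namespace SimpleGraph

variable {ι : Type*} {T : SimpleGraph ι} {S₁ S₂ S₃ : Set ι}

/-- Vertex sets of subtrees, in a form that is visibly closed under intersection. -/
def IsPathConvex (T : SimpleGraph ι) (S : Set ι) : Prop :=
  ∀ ⦃a b : ι⦄ (p : T.Walk a b), p.IsPath → a ∈ S → b ∈ S → ∀ t ∈ p.support, t ∈ S

lemma isPathConvex_univ : T.IsPathConvex Set.univ := fun _ _ _ _ _ _ _ _ => trivial

lemma IsPathConvex.inter (h₁ : T.IsPathConvex S₁) (h₂ : T.IsPathConvex S₂) :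
    T.IsPathConvex (S₁ ∩ S₂) :=
  fun _ _ p hp ha hb t ht => ⟨h₁ p hp ha.1 hb.1 t ht, h₂ p hp ha.2 hb.2 t ht⟩

lemma IsAcyclic.support_subset_of_isPath (hT : T.IsAcyclic) {a b : ι} {p : T.Walk a b}
    (hp : p.IsPath) (q : T.Walk a b) : p.support ⊆ q.support := by
  classical
  have hpq : p = q.bypass :=
    congrArg Subtype.val ((hT.subsingleton_path a b).elim ⟨p, hp⟩ ⟨q.bypass, q.bypass_isPath⟩)
  rw [hpq]
  exact q.support_bypass_subset_support

lemma IsAcyclic.isPathConvex_of_preconnected (hT : T.IsAcyclic) {S : Set ι}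
    (hS : (T.induce S).Preconnected) : T.IsPathConvex S := by
  intro a b p hp ha hb t ht
  obtain ⟨w⟩ := hS ⟨a, ha⟩ ⟨b, hb⟩
  have ht' : t ∈ (w.map (Embedding.induce S).toHom).support :=
    hT.support_subset_of_isPath hp _ ht
  rw [Walk.support_map, List.mem_map] at ht'
  obtain ⟨s, -, rfl⟩ := ht'
  exact s.2

lemma IsTree.not_adj_of_isPathConvex (hT : T.IsTree) (h₁ : T.IsPathConvex S₁)
    (h₂ : T.IsPathConvex S₂) {a u w : ι} (ha : a ∈ S₁ ∩ S₂) (hu : u ∈ S₁ \ S₂)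
    (hw : w ∈ S₂ \ S₁) : ¬ T.Adj u w := by
  classical
  intro huw
  -- Paths `u → a` inside `S₁` and `a → w` inside `S₂` avoid the edge `uw`, which is a bridge.
  let p : T.Path u a := (hT.connected u a).some.toPath
  let q : T.Path a w := (hT.connected a w).some.toPath
  have hbridge : T.IsBridge s(u, w) := isAcyclic_iff_forall_isBridge.mp hT.isAcyclic huw
  have hmem := isBridge_iff_forall_walk_mem_edges.mp hbridge (p.1.append q.1)
  rw [Walk.edges_append, List.mem_append] at hmem
  rcases hmem with h | h
  · exact hw.2 (h₁ p.1 p.2 hu.1 ha.1 w (p.1.snd_mem_support_of_mem_edges h))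
  · exact hu.2 (h₂ q.1 q.2 ha.2 hw.1 u (q.1.fst_mem_support_of_mem_edges h))

lemma IsTree.inter_inter_nonempty_of_isPathConvex (hT : T.IsTree) (h₁ : T.IsPathConvex S₁)
    (h₂ : T.IsPathConvex S₂) (h₃ : T.IsPathConvex S₃) (h₁₂ : (S₁ ∩ S₂).Nonempty)
    (h₁₃ : (S₁ ∩ S₃).Nonempty) (h₂₃ : (S₂ ∩ S₃).Nonempty) : (S₁ ∩ S₂ ∩ S₃).Nonempty := by
  classical
  obtain ⟨a, ha⟩ := h₁₂
  obtain ⟨b, hb⟩ := h₁₃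
  obtain ⟨c, hc⟩ := h₂₃
  let p : T.Path b a := (hT.connected b a).some.toPath
  let q : T.Path a c := (hT.connected a c).some.toPath
  let r : T.Path b c := (hT.connected b c).some.toPath
  -- By uniqueness of paths, `r` runs inside the walk `b → a → c`.
  have hr : ∀ t ∈ r.1.support, t ∈ S₃ ∧ (t ∈ S₁ ∨ t ∈ S₂) := by
    intro t ht
    refine ⟨h₃ r.1 r.2 hb.2 hc.2 t ht, ?_⟩
    have ht' := hT.isAcyclic.support_subset_of_isPath r.2 (p.1.append q.1) ht
    rw [Walk.mem_support_append_iff] at ht'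
    exact ht'.imp (h₁ p.1 p.2 hb.1 ha.1 t) (h₂ q.1 q.2 ha.2 hc.1 t)
  by_cases hb₂ : b ∈ S₂
  · exact ⟨b, ⟨hb.1, hb₂⟩, hb.2⟩
  -- Where `r` first leaves `S₁ \ S₂` it enters `S₁ ∩ S₂`: an edge into `S₂ \ S₁` is impossible.
  obtain ⟨d, hd, hd₁, hd₂⟩ :=
    r.1.exists_boundary_dart (S₁ \ S₂) ⟨hb.1, hb₂⟩ (fun h => h.2 hc.1)
  obtain ⟨hd₃, hd₁₂⟩ := hr d.snd (r.1.dart_snd_mem_support_of_mem_darts hd)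
  by_cases hs₁ : d.snd ∈ S₁
  · exact ⟨d.snd, ⟨hs₁, by_contra fun h => hd₂ ⟨hs₁, h⟩⟩, hd₃⟩
  · exact absurd d.adj (hT.not_adj_of_isPathConvex h₁ h₂ ha hd₁ ⟨hd₁₂.resolve_left hs₁, hs₁⟩)

lemma IsTree.sInter_nonempty_of_isPathConvex (hT : T.IsTree) {F : Set (Set ι)} (hF : F.Finite)
    (hconv : ∀ S ∈ F, T.IsPathConvex S) (hpair : ∀ S ∈ F, ∀ S' ∈ F, (S ∩ S').Nonempty) :
    (⋂₀ F).Nonempty := by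
  suffices key : ∀ C, T.IsPathConvex C → C.Nonempty → (∀ S ∈ F, (C ∩ S).Nonempty) →
      (C ∩ ⋂₀ F).Nonempty by
    have : Nonempty ι := hT.connected.nonempty
    simpa using key Set.univ isPathConvex_univ Set.univ_nonempty
      (fun S hS => by simpa using (hpair S hS S hS))
  induction F, hF using Set.Finite.induction_on with
  | empty => simp
  | @insert S F _ _ ih =>
    intro C hC hCne hCF
    simp only [Set.mem_insert_iff, forall_eq_or_imp] at hconv hpair hCF
    -- Shrink `C` to `C ∩ S`, which by the three-set case still meets every member of `F`.
    have hCS : ∀ U ∈ F, (C ∩ S ∩ U).Nonempty := fun U hU =>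
      hT.inter_inter_nonempty_of_isPathConvex hC hconv.1 (hconv.2 U hU) hCF.1 (hCF.2 U hU)
        (hpair.1.2 U hU)
    simpa [Set.sInter_insert, Set.inter_assoc] using
      ih hconv.2 (fun U hU U' hU' => (hpair.2 U hU).2 U' hU') (C ∩ S) (hC.inter hconv.1) hCF.1 hCS

end SimpleGraph

section TreeDecomposition

variable {ι : Type} {G : SimpleGraph V} {T : SimpleGraph ι} {bag : ι → Finset V}

def bagsMeeting (bag : ι → Finset V) (X : Finset V) : Set ι :=
  {t | (bag t ∩ X).Nonempty}

omit [Fintype V] in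
lemma mem_bagsMeeting {X : Finset V} {v : V} {t : ι} (ht : v ∈ bag t) (hv : v ∈ X) :
    t ∈ bagsMeeting bag X :=
  ⟨v, Finset.mem_inter.2 ⟨ht, hv⟩⟩

omit [Fintype V] in
lemma IsTreeDecomp.reachable_of_mem_bag (hdec : IsTreeDecomp G T bag) {X : Finset V} {v : V}
    (hv : v ∈ X) {s t : ι} (hs : v ∈ bag s) (ht : v ∈ bag t) :
    (T.induce (bagsMeeting bag X)).Reachable ⟨s, mem_bagsMeeting hs hv⟩
      ⟨t, mem_bagsMeeting ht hv⟩ := by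
  have hsub : {r | v ∈ bag r} ⊆ bagsMeeting bag X := fun _ hr => mem_bagsMeeting hr hv
  exact ((hdec.2.2.2 v).preconnected ⟨s, hs⟩ ⟨t, ht⟩).map (T.induceHomOfLE hsub).toHom

omit [Fintype V] in
lemma IsTreeDecomp.reachable_of_walk (hdec : IsTreeDecomp G T bag) {X : Finset V}
    {x y : (X : Set V)} (w : (G.induce (X : Set V)).Walk x y) {s t : ι}
    (hs : (x : V) ∈ bag s) (ht : (y : V) ∈ bag t) :
    (T.induce (bagsMeeting bag X)).Reachable ⟨s, mem_bagsMeeting hs x.2⟩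
      ⟨t, mem_bagsMeeting ht y.2⟩ := by
  induction w generalizing s with
  | @nil u => exact hdec.reachable_of_mem_bag u.2 hs ht
  | @cons x z y hxz _ ih =>
    obtain ⟨r, hxr, hzr⟩ := hdec.2.2.1 x z hxz
    exact (hdec.reachable_of_mem_bag x.2 hs hxr).trans (ih hzr ht)

omit [Fintype V] in
lemma IsTreeDecomp.connected_induce_bagsMeeting (hdec : IsTreeDecomp G T bag) {X : Finset V}
    (hX : IsConnectedSet G X) : (T.induce (bagsMeeting bag X)).Connected := by
  obtain ⟨v, hv⟩ := hX.nonempty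
  obtain ⟨t₀, ht₀⟩ := hdec.2.1 v
  rw [SimpleGraph.connected_iff_exists_forall_reachable]
  refine ⟨⟨t₀, mem_bagsMeeting ht₀ hv⟩, ?_⟩
  rintro ⟨t, w, hw⟩
  rw [Finset.mem_inter] at hw
  obtain ⟨p⟩ := hX.preconnected ⟨v, hv⟩ ⟨w, hw.2⟩
  exact hdec.reachable_of_walk p ht₀ hw.1

omit [Fintype V] in
lemma IsTreeDecomp.bagsMeeting_inter_nonempty (hdec : IsTreeDecomp G T bag) {X Y : Finset V}
    (hXY : Touches G X Y) : (bagsMeeting bag X ∩ bagsMeeting bag Y).Nonempty := by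
  rcases hXY with ⟨v, hv⟩ | ⟨x, hx, y, hy, hxy⟩
  · rw [Finset.mem_inter] at hv
    obtain ⟨t, ht⟩ := hdec.2.1 v
    exact ⟨t, mem_bagsMeeting ht hv.1, mem_bagsMeeting ht hv.2⟩
  · obtain ⟨t, hxt, hyt⟩ := hdec.2.2.1 x y hxy
    exact ⟨t, mem_bagsMeeting hxt hx, mem_bagsMeeting hyt hy⟩

lemma IsTreeDecomp.exists_covers_of_isBramble (hdec : IsTreeDecomp G T bag)
    {B : Set (Finset V)} (hB : IsBramble G B) : ∃ t, Covers (bag t) B := by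
  obtain ⟨t, ht⟩ := hdec.1.sInter_nonempty_of_isPathConvex (F := bagsMeeting bag '' B)
    (B.toFinite.image _)
    (by
      rintro _ ⟨X, hX, rfl⟩
      exact hdec.1.isAcyclic.isPathConvex_of_preconnected
        (hdec.connected_induce_bagsMeeting (hB.1 X hX)).preconnected)
    (by
      rintro _ ⟨X, hX, rfl⟩ _ ⟨Y, hY, rfl⟩
      exact hdec.bagsMeeting_inter_nonempty (hB.2 X hX Y hY))
  exact ⟨t, fun X hX => ht _ ⟨X, hX, rfl⟩⟩

end TreeDecomposition

/-- if `G` has a bramble of order `> k`, then every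
tree-decomposition of `G` has a bag covering the bramble; consequently
the tree-width of `G` is at least `k`. -/
theorem bramble_forces_cover_and_treewidth (G : SimpleGraph V) (k : ℕ)
    (B : Set (Finset V)) (hbr : IsBramble G B) (hord : BrambleOrderGT B k) :
    (∀ (ι : Type) (T : SimpleGraph ι) (bag : ι → Finset V),
        IsTreeDecomp G T bag → ∃ t, Covers (bag t) B) ∧
      ¬ HasDecompOfWidthLT G k := by
  have hcover : ∀ (ι : Type) (T : SimpleGraph ι) (bag : ι → Finset V),
      IsTreeDecomp G T bag → ∃ t, Covers (bag t) B :=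
    fun _ _ _ hdec => hdec.exists_covers_of_isBramble hbr
  refine ⟨hcover, ?_⟩
  rintro ⟨ι, T, bag, hdec, hsmall⟩
  obtain ⟨t, ht⟩ := hcover ι T bag hdec
  exact (hord _ ht).not_ge (hsmall t)
end

section
/- Menger-style replacement: Let (T, l) be a tree-decomposition of G, let x be a node of T, and let S be a vertex set such that there exist |S| vertex-disjoint paths (P_s)_{s∈S} from l(x) to S each meeting a set B only in its endpoint s. Define l'(t) = (l(t) ∩ B) ∪ {s ∈ S : t lies on the path in T from x to t_s}, where t_s is a chosen node with s ∈ l(t_s). Then (T, l') is a tree-decomposition of G[B] and |l'(t)| ≤ |l(t)| for every node t. -/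
open Finset

variable {V : Type} [Fintype V] [DecidableEq V]

/-!
If a node `t` lies on the tree path from `x` to `t_s`, then `l t` separates `l x` from `s` in `G`,
so the path `P s` meets `l t`. As the paths are disjoint and each meets `B` only in its
endpoint, every terminal `s ∉ l t` added to the bag at `t` can be charged to its own vertex of
`l t \ B`, which is dropped from that bag. The bags containing a terminal `s` are those of `l`
containing it together with the tree path from `x` to `t_s`, and these two subtrees meet at `t_s`.
-/

namespace SimpleGraph

variable {ι : Type} {T : SimpleGraph ι}

lemma Connected.exists_walk_support_subset_of_induce {s : Set ι}
    (h : (T.induce s).Connected) {a b : ι} (ha : a ∈ s) (hb : b ∈ s) :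
    ∃ q : T.Walk a b, ∀ z ∈ q.support, z ∈ s := by
  obtain ⟨w⟩ := h ⟨a, ha⟩ ⟨b, hb⟩
  refine ⟨w.map (Embedding.induce s).toHom, fun z hz => ?_⟩
  obtain ⟨u, -, rfl⟩ := List.mem_map.mp (Walk.support_map _ w ▸ hz)
  exact u.property

lemma IsTree.mem_support_of_onTreePath (hT : T.IsTree) {x y t : ι}
    (h : OnTreePath T x y t) (q : T.Walk x y) : t ∈ q.support := by
  classical
  obtain ⟨p, hp, ht⟩ := h
  have hpq : (⟨p, hp⟩ : T.Path x y) = q.toPath := (hT.isAcyclic.subsingleton_path x y).allEq _ _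
  apply q.support_toPath_subset_support
  rwa [← hpq]

lemma IsTree.onTreePath_iff_mem_support (hT : T.IsTree) {x y t : ι} {p : T.Walk x y}
    (hp : p.IsPath) : OnTreePath T x y t ↔ t ∈ p.support :=
  ⟨fun h => hT.mem_support_of_onTreePath h p, fun h => ⟨p, hp, h⟩⟩

end SimpleGraph

open SimpleGraph

namespace IsTreeDecomp

variable {V ι : Type} {G : SimpleGraph V} {T : SimpleGraph ι} {l : ι → Finset V}

lemma exists_walk_not_mem_support (htd : IsTreeDecomp G T l) (t : ι) {a b : V}
    (w : G.Walk a b) (hw : ∀ v ∈ w.support, v ∉ l t) {ua ub : ι}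
    (ha : a ∈ l ua) (hb : b ∈ l ub) : ∃ q : T.Walk ua ub, t ∉ q.support := by
  induction w generalizing ua with
  | nil =>
    obtain ⟨q, hq⟩ := (htd.2.2.2 _).exists_walk_support_subset_of_induce ha hb
    exact ⟨q, fun ht => hw _ (by simp) (hq t ht)⟩
  | @cons a c b hac w ih =>
    obtain ⟨uc, hauc, hcuc⟩ := htd.2.2.1 a c hac
    obtain ⟨q₁, hq₁⟩ := (htd.2.2.2 a).exists_walk_support_subset_of_induce ha hauc
    obtain ⟨q₂, hq₂⟩ := ih (fun v hv => hw v (by simp [hv])) hcuc hb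
    refine ⟨q₁.append q₂, fun ht => ?_⟩
    rcases (Walk.mem_support_append_iff q₁ q₂).mp ht with ht | ht
    · exact hw a (by simp) (hq₁ t ht)
    · exact hq₂ ht

lemma exists_mem_support_mem_bag (htd : IsTreeDecomp G T l) {ua ub t : ι}
    (ht : OnTreePath T ua ub t) {a b : V} (ha : a ∈ l ua) (hb : b ∈ l ub)
    (w : G.Walk a b) : ∃ v ∈ w.support, v ∈ l t := by
  by_contra! hw
  obtain ⟨q, hq⟩ := htd.exists_walk_not_mem_support t w hw ha hb
  exact hq (htd.1.mem_support_of_onTreePath ht q)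

lemma connected_induce_union_onTreePath (htd : IsTreeDecomp G T l) {v : V} {x y : ι}
    (hv : v ∈ l y) : (T.induce ({t | v ∈ l t} ∪ {t | OnTreePath T x y t})).Connected := by
  classical
  obtain ⟨p⟩ := htd.1.connected.preconnected x y
  have hpath : {t | OnTreePath T x y t} = {t | t ∈ p.bypass.support} :=
    Set.ext fun _ => htd.1.onTreePath_iff_mem_support p.bypass_isPath
  rw [hpath]
  exact induce_union_connected (htd.2.2.2 v).preconnected
    p.bypass.connected_induce_support.preconnected ⟨y, hv, p.bypass.end_mem_support⟩

end IsTreeDecomp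

lemma card_le_card_sdiff_of_disjoint_paths {V : Type} [DecidableEq V] {S B X R : Finset V}
    {P : V → Finset V}    (hmeet : ∀ s ∈ S, P s ∩ B = {s})
    (hdisj : ∀ s ∈ S, ∀ s' ∈ S, s ≠ s' → P s ∩ P s' = ∅)
    (hRS : R ⊆ S) (hRX : Disjoint R X) (hRP : ∀ s ∈ R, (P s ∩ X).Nonempty) :
    R.card ≤ (X \ B).card := by
  refine card_le_card_of_forall_subsingleton (fun s y => y ∈ P s) (fun s hs => ?_) ?_
  · obtain ⟨y, hy⟩ := hRP s hs
    obtain ⟨hyP, hyX⟩ := mem_inter.mp hy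
    refine ⟨y, mem_sdiff.mpr ⟨hyX, fun hyB => ?_⟩, hyP⟩
    have hys : y = s := mem_singleton.mp (hmeet s (hRS hs) ▸ mem_inter.mpr ⟨hyP, hyB⟩)
    exact disjoint_left.mp hRX hs (hys ▸ hyX)
  · intro y _ s hs s' hs'
    by_contra hne
    exact notMem_empty y (hdisj s (hRS hs.1) s' (hRS hs'.1) hne ▸ mem_inter.mpr ⟨hs.2, hs'.2⟩)

lemma card_le_card_of_disjoint_paths {V : Type} [DecidableEq V] {S B X Y : Finset V}
    {P : V → Finset V} (hmeet : ∀ s ∈ S, P s ∩ B = {s})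
    (hdisj : ∀ s ∈ S, ∀ s' ∈ S, s ≠ s' → P s ∩ P s' = ∅)
    (hYB : Y ⊆ B) (hYP : ∀ s ∈ Y \ X, s ∈ S ∧ (P s ∩ X).Nonempty) :
    Y.card ≤ X.card :=
  calc Y.card = (Y ∩ X).card + (Y \ X).card := (card_inter_add_card_sdiff _ _).symm
    _ ≤ (X ∩ B).card + (X \ B).card := add_le_add
      (card_le_card fun _ hv => mem_inter.mpr ⟨(mem_inter.mp hv).2, hYB (mem_inter.mp hv).1⟩)
      (card_le_card_sdiff_of_disjoint_paths hmeet hdisj (fun s hs => (hYP s hs).1)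
        disjoint_sdiff_self_left fun s hs => (hYP s hs).2)
    _ = X.card := card_inter_add_card_sdiff _ _

/-- Menger-style replacement: given a tree-decomposition
`(T, l)` of `G`, a node `x`, and vertex-disjoint paths `P s` from `l x`
to `s ∈ S` each meeting `B` only in `s`, the relabelling
`l' t = (l t ∩ B) ∪ {s ∈ S : t on the path from x to t_s}` is a
tree-decomposition of `G[B]` with `|l' t| ≤ |l t|` for every node. -/
theorem menger_replacement (G : SimpleGraph V) {ι : Type}
    (T : SimpleGraph ι) (l : ι → Finset V) (htd : IsTreeDecomp G T l)
    (x : ι) (S B : Finset V) (P : V → Finset V)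
    (hpath : ∀ s ∈ S, ∃ a ∈ l x, ∃ w : G.Walk a s,
      w.IsPath ∧ w.support.toFinset = P s)
    (hmeet : ∀ s ∈ S, P s ∩ B = {s})
    (hdisj : ∀ s ∈ S, ∀ s' ∈ S, s ≠ s' → P s ∩ P s' = ∅)
    (tsel : V → ι) (hts : ∀ s ∈ S, s ∈ l (tsel s))
    (l' : ι → Finset V)
    (hl' : ∀ t v, v ∈ l' t ↔
      (v ∈ l t ∧ v ∈ B) ∨ (v ∈ S ∧ OnTreePath T x (tsel v) t)) :
    IsTreeDecompOn G B T l' ∧ ∀ t, (l' t).card ≤ (l t).card := by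
  have hSB : S ⊆ B := fun s hs => (mem_inter.mp ((hmeet s hs).ge (mem_singleton_self s))).2
  have hl'B : ∀ t, l' t ⊆ B := fun t v hv => ((hl' t v).mp hv).elim And.right (hSB ·.1)
  refine ⟨⟨htd.1, hl'B, fun v hv => ?_, fun v w hv hw hvw => ?_, fun v hv => ?_⟩,
    fun t => ?_⟩
  · obtain ⟨t, ht⟩ := htd.2.1 v
    exact ⟨t, (hl' t v).mpr (.inl ⟨ht, hv⟩)⟩
  · obtain ⟨t, hvt, hwt⟩ := htd.2.2.1 v w hvw
    exact ⟨t, (hl' t v).mpr (.inl ⟨hvt, hv⟩), (hl' t w).mpr (.inl ⟨hwt, hw⟩)⟩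
  · by_cases hvS : v ∈ S
    · have hbags : {t | v ∈ l' t} = {t | v ∈ l t} ∪ {t | OnTreePath T x (tsel v) t} := by
        ext t
        simp [hl', hv, hvS]
      rw [hbags]
      exact htd.connected_induce_union_onTreePath (hts v hvS)
    · have hbags : {t | v ∈ l' t} = {t | v ∈ l t} := by
        ext t
        simp [hl', hv, hvS]
      rw [hbags]
      exact htd.2.2.2 v
  · refine card_le_card_of_disjoint_paths hmeet hdisj (hl'B t) fun s hs => ?_
    obtain ⟨hsl', hsl⟩ := mem_sdiff.mp hs
    obtain ⟨hsS, hst⟩ := ((hl' t s).mp hsl').resolve_left (hsl ·.1)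
    obtain ⟨a, ha, w, -, hwP⟩ := hpath s hsS
    obtain ⟨v, hvw, hvt⟩ := htd.exists_mem_support_mem_bag hst ha (hts s hsS) w
    exact ⟨hsS, v, mem_inter.mpr ⟨hwP ▸ List.mem_toFinset.mpr hvw, hvt⟩⟩
end

section
/- Let B be a bramble in G and (T, l) a tree-decomposition of G such that no adhesion set l(t_1) ∩ l(t_2) of an edge of T covers B. Orient each edge t_1t_2 of T towards the side containing all members of B disjoint from l(t_1) ∩ l(t_2); this orientation is well-defined, and if t is the last node of a maximal directed path in T, then the bag l(t) covers B. -/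
open Finset

variable {V : Type} [Fintype V] [DecidableEq V]

/-- The side of the edge `t₁t₂` containing `t₂`: union of bags over the
nodes `t` whose tree path to `t₂` avoids `t₁`. -/
def Side {ι : Type} (T : SimpleGraph ι) (l : ι → Finset V) (t₁ t₂ : ι) :
    Set V :=
  {v | ∃ t, v ∈ l t ∧ ¬ OnTreePath T t t₂ t₁}

/-- The edge `t₁t₂` is oriented towards `t₂`: every member of `B` disjoint
from the adhesion set lies in the side containing `t₂`. -/
def OrientedToward (B : Set (Finset V)) {ι : Type} (T : SimpleGraph ι)
    (l : ι → Finset V) (t₁ t₂ : ι) : Prop :=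
  ∀ X ∈ B, X ∩ (l t₁ ∩ l t₂) = ∅ → (↑X : Set V) ⊆ Side T l t₁ t₂

/-!
The two sides of an edge `t₁t₂` of `T` are the unions of the bags on either side of the edge.
Since the bags containing a vertex form a subtree, and `t₁t₂` is the only edge between the two
halves of `T`, the sides meet only in the adhesion set `l t₁ ∩ l t₂`. Hence a connected set
avoiding the adhesion set lies on one side, and two touching such sets cannot lie on opposite
sides, which orients the edge. If every edge at `t` points to `t` and a member `X` avoided
`l t`, a vertex of `X` would sit in a bag behind a neighbour `u` of `t` and also, by the
orientation of `ut`, on the `t`-side of `ut`, hence in `l t`.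
-/

namespace SimpleGraph.IsTree

variable {ι : Type} {T : SimpleGraph ι} (hT : T.IsTree)
include hT

lemma mem_support_of_onTreePath_s10 {x y t : ι} (h : OnTreePath T x y t) {p : T.Walk x y}
    (hp : p.IsPath) : t ∈ p.support := by
  obtain ⟨q, hq, ht⟩ := h
  rwa [(hT.existsUnique_path x y).unique hp hq]

lemma onTreePath_iff_not_onTreePath {t₁ t₂ s : ι} (hadj : T.Adj t₁ t₂) :
    OnTreePath T s t₂ t₁ ↔ ¬ OnTreePath T s t₁ t₂ := by
  constructor
  · rintro ⟨p, hp, h₁⟩ ⟨q, hq, h₂⟩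
    exact hT.isAcyclic.ne_mem_support_of_support_of_adj_of_isPath hp hq hadj.symm h₁ h₂
  · intro h
    obtain ⟨p, hp, -⟩ := hT.existsUnique_path s t₂
    obtain ⟨q, hq, -⟩ := hT.existsUnique_path s t₁
    exact ⟨p, hp, hT.isAcyclic.mem_support_of_ne_mem_support_of_adj_of_isPath
      hp hq hadj.symm fun h₂ => h ⟨q, hq, h₂⟩⟩

/-- The edge `t₁t₂` is the only edge of the tree between its two halves. -/
lemma eq_of_adj_of_not_onTreePath_of_onTreePath {t₁ t₂ a b : ι} (hadj : T.Adj t₁ t₂)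
    (hab : T.Adj a b) (ha : ¬ OnTreePath T a t₂ t₁) (hb : OnTreePath T b t₂ t₁) :
    a = t₂ ∧ b = t₁ := by
  classical
  obtain ⟨p, hp, -⟩ := hT.existsUnique_path a t₂
  have ht₁p : t₁ ∉ p.support := fun h => ha ⟨p, hp, h⟩
  have hbp : b ∉ p.support := fun h => ht₁p <| p.support_dropUntil_subset_support h <|
    hT.mem_support_of_onTreePath_s10 hb (hp.dropUntil h)
  have hb₁ : b = t₁ := by
    have := hT.mem_support_of_onTreePath_s10 hb (hp.cons hbp (h := hab.symm))
    simp only [Walk.support_cons, List.mem_cons, ht₁p, or_false] at this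
    exact this.symm
  subst hb₁
  have := hT.mem_support_of_onTreePath_s10 ((hT.onTreePath_iff_not_onTreePath hadj.symm).2 ha)
    (Path.singleton hab).2
  simp only [Path.singleton_coe, Walk.support_cons, Walk.support_nil, List.mem_cons,
    List.not_mem_nil, or_false] at this
  exact ⟨(this.resolve_right hadj.ne').symm, rfl⟩

lemma exists_adj_onTreePath {r t : ι} (hrt : r ≠ t) :
    ∃ u, T.Adj u t ∧ OnTreePath T r t u := by
  obtain ⟨p, hp, -⟩ := hT.existsUnique_path r t
  exact ⟨p.penultimate, p.adj_penultimate (Walk.not_nil_of_ne hrt), p, hp,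
    p.getVert_mem_support _⟩

end SimpleGraph.IsTree

section Orientation

omit [Fintype V]

variable {ι : Type} {G : SimpleGraph V} {T : SimpleGraph ι} {l : ι → Finset V} {t₁ t₂ : ι}

omit [DecidableEq V] in
lemma SimpleGraph.IsTree.mem_side_or_mem_side (hT : T.IsTree) (hadj : T.Adj t₁ t₂)
    {s : ι} {x y : V} (hx : x ∈ l s) (hy : y ∈ l s) :
    x ∈ Side T l t₁ t₂ ∨ y ∈ Side T l t₂ t₁ := by
  by_cases h : OnTreePath T s t₂ t₁
  · exact .inr ⟨s, hy, (hT.onTreePath_iff_not_onTreePath hadj).1 h⟩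
  · exact .inl ⟨s, hx, h⟩

namespace IsTreeDecomp

variable (htd : IsTreeDecomp G T l) (hadj : T.Adj t₁ t₂)
include htd hadj

lemma mem_adhesion_of_mem_side_of_mem_side {v : V} (h₁ : v ∈ Side T l t₁ t₂)
    (h₂ : v ∈ Side T l t₂ t₁) : v ∈ l t₁ ∩ l t₂ := by
  obtain ⟨r, hr, hr₂⟩ := h₁
  obtain ⟨r', hr', hr₁⟩ := h₂
  have hr'₂ : OnTreePath T r' t₂ t₁ := (htd.1.onTreePath_iff_not_onTreePath hadj).2 hr₁
  obtain ⟨w⟩ := (htd.2.2.2 v).preconnected ⟨r, hr⟩ ⟨r', hr'⟩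
  obtain ⟨d, -, hd₁, hd₂⟩ :=
    w.exists_boundary_dart {s | ¬ OnTreePath T s.1 t₂ t₁} hr₂ (not_not_intro hr'₂)
  obtain ⟨hfst, hsnd⟩ := htd.1.eq_of_adj_of_not_onTreePath_of_onTreePath hadj d.adj hd₁
    (not_not.1 hd₂)
  exact mem_inter.2 ⟨hsnd ▸ d.snd.2, hfst ▸ d.fst.2⟩

lemma subset_side_or_subset_side {X : Finset V} (hX : IsConnectedSet G X)
    (hXd : Disjoint X (l t₁ ∩ l t₂)) :
    (↑X : Set V) ⊆ Side T l t₁ t₂ ∨ (↑X : Set V) ⊆ Side T l t₂ t₁ := by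
  by_contra! h
  obtain ⟨⟨x, hx, hx₁⟩, ⟨y, hy, hy₂⟩⟩ := And.imp Set.not_subset.1 Set.not_subset.1 h
  have hy₁ : y ∈ Side T l t₁ t₂ := by
    obtain ⟨s, hs⟩ := htd.2.1 y
    exact (htd.1.mem_side_or_mem_side hadj hs hs).resolve_right hy₂
  obtain ⟨w⟩ := hX.preconnected ⟨y, hy⟩ ⟨x, hx⟩
  obtain ⟨⟨⟨a, b⟩, hab⟩, -, ha, hb⟩ :=
    w.exists_boundary_dart {z | z.1 ∈ Side T l t₁ t₂} hy₁ hx₁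
  obtain ⟨s, hsa, hsb⟩ := htd.2.2.1 _ _ (hab : G.Adj a b)
  refine (htd.1.mem_side_or_mem_side hadj hsb hsa).elim hb fun ha₂ => ?_
  exact disjoint_left.1 hXd a.2 (htd.mem_adhesion_of_mem_side_of_mem_side hadj ha ha₂)

lemma not_touches_of_subset_side {X Y : Finset V} (hX : (↑X : Set V) ⊆ Side T l t₂ t₁)
    (hY : (↑Y : Set V) ⊆ Side T l t₁ t₂) (hXd : Disjoint X (l t₁ ∩ l t₂))
    (hYd : Disjoint Y (l t₁ ∩ l t₂)) : ¬ Touches G X Y := by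
  have hmem {v : V} := htd.mem_adhesion_of_mem_side_of_mem_side (v := v) hadj
  rintro (⟨v, hv⟩ | ⟨x, hx, y, hy, hxy⟩)
  · obtain ⟨hvX, hvY⟩ := mem_inter.1 hv
    exact disjoint_left.1 hXd hvX (hmem (hY hvY) (hX hvX))
  · obtain ⟨s, hsx, hsy⟩ := htd.2.2.1 x y hxy
    rcases htd.1.mem_side_or_mem_side hadj hsx hsy with hx₁ | hy₂
    · exact disjoint_left.1 hXd hx (hmem hx₁ (hX hx))
    · exact disjoint_left.1 hYd hy (hmem (hY hy) hy₂)

end IsTreeDecomp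

lemma IsBramble.nonempty {B : Set (Finset V)} (hbr : IsBramble G B) {X : Finset V}
    (hX : X ∈ B) : X.Nonempty :=
  coe_nonempty.1 (Set.nonempty_coe_sort.1 (hbr.1 X hX).nonempty)

lemma IsBramble.orientedToward_or_orientedToward {B : Set (Finset V)} (hbr : IsBramble G B)
    (htd : IsTreeDecomp G T l) (hadj : T.Adj t₁ t₂) :
    OrientedToward B T l t₁ t₂ ∨ OrientedToward B T l t₂ t₁ := by
  by_contra! h
  obtain ⟨hX, hY⟩ := h
  simp only [OrientedToward, not_forall] at hX hY
  obtain ⟨X, hXB, hXd, hXs⟩ := hX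
  obtain ⟨Y, hYB, hYd, hYs⟩ := hY
  rw [← disjoint_iff_inter_eq_empty] at hXd hYd
  have hY := (htd.subset_side_or_subset_side hadj.symm (hbr.1 Y hYB) hYd).resolve_left hYs
  have hX := (htd.subset_side_or_subset_side hadj (hbr.1 X hXB) hXd).resolve_left hXs
  rw [inter_comm] at hYd
  exact htd.not_touches_of_subset_side hadj hX hY hXd hYd (hbr.2 X hXB Y hYB)

lemma IsTreeDecomp.covers_of_forall_orientedToward {B : Set (Finset V)}
    (htd : IsTreeDecomp G T l) (hne : ∀ X ∈ B, X.Nonempty) {t : ι}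
    (h : ∀ u, T.Adj u t → OrientedToward B T l u t) : Covers (l t) B := by
  intro X hXB
  rw [← not_disjoint_iff_nonempty_inter]
  intro hXt
  obtain ⟨x, hx⟩ := hne X hXB
  obtain ⟨r, hr⟩ := htd.2.1 x
  have hrt : r ≠ t := by
    rintro rfl
    exact disjoint_right.1 hXt hx hr
  obtain ⟨u, hut, hru⟩ := htd.1.exists_adj_onTreePath hrt
  have hXd : X ∩ (l u ∩ l t) = ∅ :=
    disjoint_iff_inter_eq_empty.1 (hXt.symm.mono_right inter_subset_right)
  have hx₁ : x ∈ Side T l u t := h u hut X hXB hXd hx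
  have hx₂ : x ∈ Side T l t u := ⟨r, hr, (htd.1.onTreePath_iff_not_onTreePath hut).1 hru⟩
  exact disjoint_right.1 hXt hx
    (mem_inter.1 (htd.mem_adhesion_of_mem_side_of_mem_side hut hx₁ hx₂)).2

end Orientation

theorem orientation_and_sink_covers_general (G : SimpleGraph V) {ι : Type}
    (T : SimpleGraph ι) (l : ι → Finset V) (B : Set (Finset V))
    (hbr : IsBramble G B) (htd : IsTreeDecomp G T l) :
    (∀ t₁ t₂, T.Adj t₁ t₂ →
        OrientedToward B T l t₁ t₂ ∨ OrientedToward B T l t₂ t₁) ∧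
    ∀ t, (∀ u, T.Adj u t → OrientedToward B T l u t) → Covers (l t) B :=
  ⟨fun _ _ hadj => hbr.orientedToward_or_orientedToward htd hadj,
    fun _ h => htd.covers_of_forall_orientedToward (fun _ => hbr.nonempty) h⟩

/-- if no adhesion set of `(T, l)` covers the bramble `B`,
then every edge of `T` can be oriented towards the side containing all
members of `B` disjoint from its adhesion set, and the bag of any node all
of whose incident edges are oriented towards it covers `B`. -/
theorem orientation_and_sink_covers (G : SimpleGraph V) {ι : Type}
    (T : SimpleGraph ι) (l : ι → Finset V) (B : Set (Finset V))
    (hbr : IsBramble G B) (htd : IsTreeDecomp G T l)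
    (hadh : ∀ t₁ t₂, T.Adj t₁ t₂ → ¬ Covers (l t₁ ∩ l t₂) B) :
    (∀ t₁ t₂, T.Adj t₁ t₂ →
        OrientedToward B T l t₁ t₂ ∨ OrientedToward B T l t₂ t₁) ∧
    ∀ t, (∀ u, T.Adj u t → OrientedToward B T l u t) → Covers (l t) B :=
  orientation_and_sink_covers_general G T l B hbr htd
end

section
/- Let B be a family of k-flaps containing a k-flap of every partial (<k)-decomposition of G, and let B' be the set of connected elements of B. Then B' has order > k, i.e., no vertex set of size ≤ k meets every element of B'. -/
open Finset

variable {V : Type} [Fintype V] [DecidableEq V]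

/-!
For `|S| ≤ k`, the star decomposition with centre bag `S` and one leaf bag `C ∪ S` for each
component `C` of `G - S` is a partial (<k)-decomposition, and its `k`-flaps are components of
`G - S`. Hence `B` contains a component of `G - S`: a connected member of `B` that avoids `S`.
-/

open SimpleGraph

lemma SimpleGraph.induce_connected_of_forall_adj {α : Type*} {H : SimpleGraph α} {s : Set α}
    {a : α} (ha : a ∈ s) (h : ∀ b ∈ s, a ≠ b → H.Adj a b) : (H.induce s).Connected :=
  .of_isUniversal (v := ⟨a, ha⟩) fun b hb => h b b.2 fun e => hb (Subtype.ext e)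

section Connectivity

variable {G : SimpleGraph V}

lemma isConnectedSet_singleton (G : SimpleGraph V) (v : V) : IsConnectedSet G {v} :=
  induce_connected_of_forall_adj (a := v) (by simp) fun b hb hne =>
    absurd (by simpa using hb) hne.symm

lemma IsConnectedSet.union {C D : Finset V} (hC : IsConnectedSet G C)
    (hD : IsConnectedSet G D) (h : Touches G C D) : IsConnectedSet G (C ∪ D) := by
  unfold IsConnectedSet
  rw [coe_union]
  rcases h with hCD | ⟨v, hv, w, hw, hvw⟩
  · exact induce_union_connected hC.preconnected hD.preconnected (by exact_mod_cast hCD)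
  · exact connected_induce_union hC.preconnected hD.preconnected hv hw hvw

end Connectivity

section Components

variable {G : SimpleGraph V} {S C D : Finset V}

lemma exists_isCompOf_mem (G : SimpleGraph V) {v : V} (hv : v ∉ S) :
    ∃ C, IsCompOf G S C ∧ v ∈ C := by
  classical
  let P : Finset V → Prop := fun D => v ∈ D ∧ D ∩ S = ∅ ∧ IsConnectedSet G D
  have hP : P {v} :=
    ⟨mem_singleton_self v, singleton_inter_of_notMem hv, isConnectedSet_singleton G v⟩
  obtain ⟨C, hC, hmax⟩ := exists_max_image {D | P D} card ⟨{v}, by simpa using hP⟩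
  simp only [mem_filter_univ] at hC hmax
  refine ⟨C, ⟨⟨v, hC.1⟩, hC.2.1, hC.2.2, fun D hCD hDS hD => ?_⟩, hC.1⟩
  exact (eq_of_subset_of_card_le hCD (hmax D ⟨hCD hC.1, hDS, hD⟩)).symm

lemma IsCompOf.subset_of_touches (hC : IsCompOf G S C) (hD : IsConnectedSet G D)
    (hDS : D ∩ S = ∅) (h : Touches G C D) : D ⊆ C := by
  have hunion := hC.2.2.2 (C ∪ D) subset_union_left
    (by rw [union_inter_distrib_right, hC.2.1, hDS, union_empty]) (hC.2.2.1.union hD h)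
  exact union_eq_left.mp hunion

lemma IsCompOf.mem_of_adj (hC : IsCompOf G S C) {v w : V} (hv : v ∈ C) (hw : w ∉ S)
    (hvw : G.Adj v w) : w ∈ C :=
  hC.subset_of_touches (isConnectedSet_singleton G w) (singleton_inter_of_notMem hw)
    (.inr ⟨v, hv, w, mem_singleton_self w, hvw⟩) (mem_singleton_self w)

lemma IsCompOf.eq_of_mem (hC : IsCompOf G S C) (hD : IsCompOf G S D) {v : V} (hvC : v ∈ C)
    (hvD : v ∈ D) : C = D :=
  (hD.subset_of_touches hC.2.2.1 hC.2.1 (.inl ⟨v, mem_inter.mpr ⟨hvD, hvC⟩⟩)).antisymm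
    (hC.subset_of_touches hD.2.2.1 hD.2.1 (.inl ⟨v, mem_inter.mpr ⟨hvC, hvD⟩⟩))

end Components

section StarDecomposition

/-- The paper's leaf bag `C ∪ N(C)` is padded to `C ∪ S`; since `N(C) ⊆ S`, this keeps the
decomposition valid and the flap at the leaf equal to `C`. -/
def starBag (G : SimpleGraph V) (S : Finset V) :
    Option {C : Finset V // IsCompOf G S C} → Finset V
  | none => S
  | some C => C.1 ∪ S

abbrev starTree (G : SimpleGraph V) (S : Finset V) :
    SimpleGraph (Option {C : Finset V // IsCompOf G S C}) :=
  starGraph none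

variable {G : SimpleGraph V} {S : Finset V}

lemma starTree_adj_some {C : {C : Finset V // IsCompOf G S C}} {u} :
    (starTree G S).Adj (some C) u ↔ u = none := by
  simp only [starGraph_adj, reduceCtorEq, false_or]
  exact ⟨And.right, fun h => ⟨h ▸ Option.some_ne_none C, h⟩⟩

lemma isInternal_starTree {t} (ht : IsInternal (starTree G S) t) : t = none := by
  obtain ⟨u, u', hu, hu', hne⟩ := ht
  cases t with
  | none => rfl
  | some C => exact absurd ((starTree_adj_some.mp hu).trans (starTree_adj_some.mp hu').symm) hne

lemma isTreeDecomp_star (G : SimpleGraph V) (S : Finset V) :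
    IsTreeDecomp G (starTree G S) (starBag G S) := by
  refine ⟨isTree_starGraph none, fun v => ?_, fun v w hvw => ?_, fun v => ?_⟩
  · by_cases hv : v ∈ S
    · exact ⟨none, hv⟩
    · obtain ⟨C, hC, hvC⟩ := exists_isCompOf_mem G hv
      exact ⟨some ⟨C, hC⟩, mem_union_left S hvC⟩
  · by_cases hv : v ∈ S
    · by_cases hw : w ∈ S
      · exact ⟨none, hv, hw⟩
      · obtain ⟨C, hC, hwC⟩ := exists_isCompOf_mem G hw
        exact ⟨some ⟨C, hC⟩, mem_union_right C hv, mem_union_left S hwC⟩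
    · obtain ⟨C, hC, hvC⟩ := exists_isCompOf_mem G hv
      refine ⟨some ⟨C, hC⟩, mem_union_left S hvC, ?_⟩
      by_cases hw : w ∈ S
      · exact mem_union_right C hw
      · exact mem_union_left S (hC.mem_of_adj hvC hw hvw)
  · by_cases hv : v ∈ S
    · exact induce_connected_of_forall_adj (a := none) hv fun t _ ht => starGraph_center_adj ht
    · obtain ⟨C, hC, hvC⟩ := exists_isCompOf_mem G hv
      refine induce_connected_of_forall_adj (a := some ⟨C, hC⟩) (mem_union_left S hvC)
        fun t ht hne => absurd ?_ hne
      cases t with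
      | none => exact absurd ht hv
      | some D =>
        exact congrArg some (Subtype.ext
          (hC.eq_of_mem D.2 hvC ((mem_union.mp ht).resolve_right hv)))

lemma isPartialDecomp_star (G : SimpleGraph V) {k : ℕ} (hS : S.card ≤ k) :
    IsPartialDecomp G k (starTree G S) (starBag G S) :=
  ⟨isTreeDecomp_star G S, fun t ht => by rwa [isInternal_starTree ht], none, hS⟩

lemma IsFlap.isCompOf_of_star {k : ℕ} {X : Finset V} (hS : S.card ≤ k)
    (h : IsFlap k (starTree G S) (starBag G S) X) : IsCompOf G S X := by
  obtain ⟨t, u, htu, -, hbig, rfl⟩ := h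
  cases t with
  | none => exact absurd hbig hS.not_gt
  | some C =>
    rw [starTree_adj_some.mp htu, starBag, starBag, union_sdiff_right,
      sdiff_eq_self_of_disjoint (disjoint_iff_inter_eq_empty.mpr C.2.2.1)]
    exact C.2

end StarDecomposition

theorem connected_flaps_order_gt_general (G : SimpleGraph V) (k : ℕ)
    (B : Set (Finset V))
    (hhit : ∀ (ι : Type) (T : SimpleGraph ι) (bag : ι → Finset V),
      IsPartialDecomp G k T bag → ∃ X, IsFlap k T bag X ∧ X ∈ B) :
    ∀ S : Finset V, S.card ≤ k →
      ¬ Covers S {X | X ∈ B ∧ IsConnectedSet G X} := by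
  intro S hS hcov
  obtain ⟨X, hflap, hXB⟩ := hhit _ _ _ (isPartialDecomp_star G hS)
  have hX := hflap.isCompOf_of_star hS
  obtain ⟨v, hv⟩ := hcov X ⟨hXB, hX.2.2.1⟩
  rw [inter_comm, hX.2.1] at hv
  exact notMem_empty v hv

/-- if `B` is a family of `k`-flaps containing a `k`-flap of
every partial (<k)-decomposition of `G` (of tree-width `≥ k`), then the
subfamily `B'` of connected members of `B` has order `> k`: no vertex set
of size `≤ k` meets every element of `B'`. -/
theorem connected_flaps_order_gt (G : SimpleGraph V) (k : ℕ)
    (htw : ¬ HasDecompOfWidthLT G k) (B : Set (Finset V))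
    (hflaps : ∀ X ∈ B, FlapOf G k X)
    (hhit : ∀ (ι : Type) (T : SimpleGraph ι) (bag : ι → Finset V),
      IsPartialDecomp G k T bag → ∃ X, IsFlap k T bag X ∧ X ∈ B) :
    ∀ S : Finset V, S.card ≤ k →
      ¬ Covers S {X | X ∈ B ∧ IsConnectedSet G X} :=
  connected_flaps_order_gt_general G k B hhit
end
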